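/- Multiplicity of equilibrium: there exists ε > 0 such that for every x ∈ (0, ε], the balanced pair (x, B x) is a Nash equilibrium of the interdealer game satisfying the strict inequalities x < m_A(B x) and B x > s_A(x); moreover the map x ↦ (x, B x) is injective on (0, ε], so the set of Nash equilibria is a continuum (in particular, infinite). -/

import Mathlib

/-!
On the compact interval `[0, r_b]` the derivatives satisfy `D' ≥ m` and `S' ≤ -m` for some
`m > 0`. Write `y = B x`. As `x → 0` we have `D x → 0` while `y ≥ r̂`, so eventually
`D x < m (y - 2x)`. Under this smallness the slope bounds make `r ↦ (y - r) D r` strictly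
increasing on `[0, 2x]`, and `r ↦ (r - x) S r` strictly decreasing on `[y, r_b]` with a value
at `y - x` above its value at `y`. Hence undercutting `x` or overshooting `y` loses, moving
towards the other dealer only leaves unmatched quantity, and the maximisers satisfy
`x < m_A y` and `s_A x < y`.
-/

open Set

/-- Interdealer trade quantity `Q(x,y) = min (D x) (S y)`. -/
noncomputable def interQ (D S : ℝ → ℝ) (x y : ℝ) : ℝ := min (D x) (S y)

/-- Payoff of `BD_mm`. -/
noncomputable def piMM (D S : ℝ → ℝ) (x y : ℝ) : ℝ :=
  (1 / 2) * max (y - x) 0 * interQ D S x y - max (D x - interQ D S x y) 0 * x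

/-- Payoff of `BD_rm`. -/
noncomputable def piRM (D S : ℝ → ℝ) (x y : ℝ) : ℝ :=
  (1 / 2) * max (y - x) 0 * interQ D S x y - max (S y - interQ D S x y) 0 * y

/-- Nash equilibrium of the interdealer game. -/
def IsNash (D S : ℝ → ℝ) (rb x y : ℝ) : Prop :=
  0 ≤ x ∧ x ≤ y ∧ y ≤ rb ∧
  (∀ x' ∈ Set.Icc (0:ℝ) y, piMM D S x' y ≤ piMM D S x y) ∧
  (∀ y' ∈ Set.Icc x rb, piRM D S x y' ≤ piRM D S x y)

theorem exists_uniform_slope_bounds {f g : ℝ → ℝ} {s : Set ℝ} (hs : IsCompact s)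
    (hsc : Convex ℝ s) (hf : DifferentiableOn ℝ f s) (hg : DifferentiableOn ℝ g s)
    (hf' : ContinuousOn (deriv f) s) (hg' : ContinuousOn (deriv g) s)
    (hfpos : ∀ t ∈ s, 0 < deriv f t) (hgneg : ∀ t ∈ s, deriv g t < 0) :
    ∃ m > 0, (∀ a ∈ s, ∀ b ∈ s, a ≤ b → m * (b - a) ≤ f b - f a) ∧
      (∀ a ∈ s, ∀ b ∈ s, a ≤ b → g b - g a ≤ -m * (b - a)) := by
  obtain ⟨m, hm, hmin⟩ := hs.exists_forall_le' (hf'.inf hg'.neg)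
    fun t ht => lt_inf_iff.2 ⟨hfpos t ht, neg_pos.2 (hgneg t ht)⟩
  exact ⟨m, hm, hsc.mul_sub_le_image_sub_of_le_deriv hf.continuousOn
    (hf.mono interior_subset) fun t ht => (hmin t (interior_subset ht)).trans inf_le_left,
    hsc.image_sub_le_mul_sub_of_deriv_le hg.continuousOn (hg.mono interior_subset)
    fun t ht => le_neg.1 ((hmin t (interior_subset ht)).trans inf_le_right)⟩

section BalancedPair

variable {D S : ℝ → ℝ} {rb m x y : ℝ}

theorem piMM_eq_of_le (hxy : x ≤ y) (h : D x ≤ S y) :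
    piMM D S x y = (y - x) * D x / 2 := by
  rw [piMM, interQ, min_eq_left h, sub_self, max_self, max_eq_left (sub_nonneg.2 hxy)]
  ring

theorem piMM_eq_of_ge (hxy : x ≤ y) (h : S y ≤ D x) :
    piMM D S x y = (y - x) * S y / 2 - (D x - S y) * x := by
  rw [piMM, interQ, min_eq_right h, max_eq_left (sub_nonneg.2 h), max_eq_left (sub_nonneg.2 hxy)]
  ring

theorem piRM_eq_of_le (hxy : x ≤ y) (h : S y ≤ D x) :
    piRM D S x y = (y - x) * S y / 2 := by
  rw [piRM, interQ, min_eq_right h, sub_self, max_self, max_eq_left (sub_nonneg.2 hxy)]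
  ring

theorem piRM_eq_of_ge (hxy : x ≤ y) (h : D x ≤ S y) :
    piRM D S x y = (y - x) * D x / 2 - (S y - D x) * y := by
  rw [piRM, interQ, min_eq_left h, max_eq_left (sub_nonneg.2 h), max_eq_left (sub_nonneg.2 hxy)]
  ring

theorem monotoneOn_of_slope_ge {s : Set ℝ} (hm : 0 ≤ m)
    (hD : ∀ a ∈ s, ∀ b ∈ s, a ≤ b → m * (b - a) ≤ D b - D a) : MonotoneOn D s :=
  fun a ha b hb hab => by nlinarith [hD a ha b hb hab]

theorem antitoneOn_of_slope_le {s : Set ℝ} (hm : 0 ≤ m)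
    (hS : ∀ a ∈ s, ∀ b ∈ s, a ≤ b → S b - S a ≤ -m * (b - a)) : AntitoneOn S s :=
  fun a ha b hb hab => by nlinarith [hS a ha b hb hab]

theorem spread_mul_demand_lt {a b : ℝ}
    (hD : ∀ a ∈ Icc 0 rb, ∀ b ∈ Icc 0 rb, a ≤ b → m * (b - a) ≤ D b - D a)
    (ha : 0 ≤ a) (hab : a < b) (hby : b ≤ y) (hy : y ≤ rb) (hDa : D a < m * (y - b)) :
    (y - a) * D a < (y - b) * D b := by
  have := hD a ⟨ha, by linarith⟩ b ⟨by linarith, by linarith⟩ hab.le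
  nlinarith

theorem spread_mul_supply_lt {a b : ℝ}
    (hS : ∀ a ∈ Icc 0 rb, ∀ b ∈ Icc 0 rb, a ≤ b → S b - S a ≤ -m * (b - a))
    (hx : 0 ≤ x) (hxa : x ≤ a) (hab : a < b) (hb : b ≤ rb) (hSb : S b < m * (a - x)) :
    (b - x) * S b < (a - x) * S a := by
  have := hS a ⟨by linarith, by linarith⟩ b ⟨by linarith, hb⟩ hab.le
  nlinarith

theorem piMM_le_of_balanced (hm : 0 ≤ m)
    (hD : ∀ a ∈ Icc 0 rb, ∀ b ∈ Icc 0 rb, a ≤ b → m * (b - a) ≤ D b - D a)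
    (hx : 0 ≤ x) (hxy : x ≤ y) (hy : y ≤ rb) (hbal : S y = D x) (hDx : 0 ≤ D x)
    (hsmall : D x < m * (y - x)) :
    ∀ x' ∈ Icc 0 y, piMM D S x' y ≤ piMM D S x y := by
  intro x' ⟨hx'0, hx'y⟩
  have hDmono := monotoneOn_of_slope_ge hm hD
  have hx'mem : x' ∈ Icc 0 rb := ⟨hx'0, hx'y.trans hy⟩
  have hxmem : x ∈ Icc 0 rb := ⟨hx, hxy.trans hy⟩
  rw [piMM_eq_of_le hxy hbal.ge]
  rcases lt_or_ge x x' with hxx' | hx'x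
  · have hDxx' := hDmono hxmem hx'mem hxx'.le
    rw [piMM_eq_of_ge hx'y (hbal ▸ hDxx'), hbal]
    nlinarith
  · have hDx'x := hDmono hx'mem hxmem hx'x
    rw [piMM_eq_of_le hx'y (hbal ▸ hDx'x)]
    rcases hx'x.eq_or_lt with rfl | hlt
    · rfl
    · linarith [spread_mul_demand_lt hD hx'0 hlt hxy hy (hDx'x.trans_lt hsmall)]

theorem piRM_le_of_balanced (hm : 0 ≤ m)
    (hS : ∀ a ∈ Icc 0 rb, ∀ b ∈ Icc 0 rb, a ≤ b → S b - S a ≤ -m * (b - a))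
    (hx : 0 ≤ x) (hxy : x ≤ y) (hy : y ≤ rb) (hbal : S y = D x) (hDx : 0 ≤ D x)
    (hsmall : D x < m * (y - x)) :
    ∀ y' ∈ Icc x rb, piRM D S x y' ≤ piRM D S x y := by
  intro y' ⟨hxy', hy'⟩
  have hSanti := antitoneOn_of_slope_le hm hS
  have hy'mem : y' ∈ Icc 0 rb := ⟨hx.trans hxy', hy'⟩
  have hymem : y ∈ Icc 0 rb := ⟨hx.trans hxy, hy⟩
  rw [piRM_eq_of_le hxy hbal.le]
  rcases lt_or_ge y' y with hy'y | hyy'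
  · have hSyy' := hSanti hy'mem hymem hy'y.le
    rw [piRM_eq_of_ge hxy' (hbal ▸ hSyy'), hbal]
    nlinarith
  · have hSy'y := hSanti hymem hy'mem hyy'
    rw [piRM_eq_of_le hxy' (hbal ▸ hSy'y)]
    rcases hyy'.eq_or_lt with rfl | hlt
    · rfl
    · linarith [spread_mul_supply_lt hS hx hxy hlt hy' (hSy'y.trans_lt (hbal ▸ hsmall))]

theorem isNash_of_balanced (hm : 0 ≤ m)
    (hD : ∀ a ∈ Icc 0 rb, ∀ b ∈ Icc 0 rb, a ≤ b → m * (b - a) ≤ D b - D a)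
    (hS : ∀ a ∈ Icc 0 rb, ∀ b ∈ Icc 0 rb, a ≤ b → S b - S a ≤ -m * (b - a))
    (hx : 0 ≤ x) (hxy : x ≤ y) (hy : y ≤ rb) (hbal : S y = D x) (hDx : 0 ≤ D x)
    (hsmall : D x < m * (y - x)) : IsNash D S rb x y :=
  ⟨hx, hxy, hy, piMM_le_of_balanced hm hD hx hxy hy hbal hDx hsmall,
    piRM_le_of_balanced hm hS hx hxy hy hbal hDx hsmall⟩

theorem lt_of_isMaxOn_spread_mul_demand {r : ℝ} (hm : 0 ≤ m)
    (hD : ∀ a ∈ Icc 0 rb, ∀ b ∈ Icc 0 rb, a ≤ b → m * (b - a) ≤ D b - D a)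
    (hx : 0 < x) (h2x : 2 * x ≤ y) (hy : y ≤ rb) (hsmall : D x < m * (y - 2 * x))
    (hr : r ∈ Icc 0 y) (hmax : IsMaxOn (fun r => (y - r) * D r) (Icc 0 y) r) : x < r := by
  by_contra! hrx
  have hgr : (y - r) * D r ≤ (y - x) * D x := by
    rcases hrx.eq_or_lt with rfl | hlt
    · rfl
    · have hDrx := monotoneOn_of_slope_ge hm hD ⟨hr.1, by linarith⟩ ⟨hx.le, by linarith⟩ hrx
      exact (spread_mul_demand_lt hD hr.1 hlt (by linarith) hy (by nlinarith)).le
  have hgx := spread_mul_demand_lt hD hx.le (by linarith : x < 2 * x) h2x hy hsmall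
  have hg2x := isMaxOn_iff.1 hmax (2 * x) ⟨by linarith, h2x⟩
  exact (hgr.trans_lt hgx).not_ge hg2x

theorem lt_of_isMaxOn_spread_mul_supply {r : ℝ} (hm : 0 ≤ m)
    (hS : ∀ a ∈ Icc 0 rb, ∀ b ∈ Icc 0 rb, a ≤ b → S b - S a ≤ -m * (b - a))
    (hx : 0 < x) (h2x : 2 * x ≤ y) (hy : y ≤ rb) (hsmall : S y < m * (y - 2 * x))
    (hr : r ∈ Icc x rb) (hmax : IsMaxOn (fun r => (r - x) * S r) (Icc x rb) r) : r < y := by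
  by_contra! hyr
  have hhr : (r - x) * S r ≤ (y - x) * S y := by
    rcases hyr.eq_or_lt with rfl | hlt
    · rfl
    · have hSry := antitoneOn_of_slope_le hm hS ⟨by linarith, hy⟩ ⟨by linarith, hr.2⟩ hyr
      exact (spread_mul_supply_lt hS hx.le (by linarith) hlt hr.2 (by nlinarith)).le
  have hhy := spread_mul_supply_lt hS hx.le (by linarith) (by linarith : y - x < y) hy
    (by linarith)
  have hhyx := isMaxOn_iff.1 hmax (y - x) ⟨by linarith, by linarith⟩
  exact (hhr.trans_lt hhy).not_ge hhyx

end BalancedPair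

theorem multiplicity_of_equilibrium_general
    (rhat rb : ℝ) (D S B mA sA : ℝ → ℝ)
    (hrhat : 0 < rhat) (hrb : rhat < rb)
    (hD0 : D 0 = 0)
    (U : Set ℝ) (hUo : IsOpen U) (hU : Icc (0:ℝ) rb ⊆ U)
    (hD2 : ContDiffOn ℝ 2 D U) (hS2 : ContDiffOn ℝ 2 S U)
    (hD' : ∀ x ∈ Icc (0:ℝ) rb, 0 < deriv D x)
    (hS' : ∀ x ∈ Icc (0:ℝ) rb, deriv S x < 0)
    (hB : ∀ x ∈ Icc (0:ℝ) rhat, B x ∈ Icc rhat rb ∧ S (B x) = D x)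
    (hmA : ∀ y ∈ Ioc (0:ℝ) rb, mA y ∈ Icc (0:ℝ) y ∧
      (∀ r ∈ Icc (0:ℝ) y, (y - r) * D r ≤ (y - mA y) * D (mA y)) ∧
      (∀ m ∈ Icc (0:ℝ) y,
        (∀ r ∈ Icc (0:ℝ) y, (y - r) * D r ≤ (y - m) * D m) → m = mA y))
    (hsA : ∀ x ∈ Ico (0:ℝ) rb, sA x ∈ Icc x rb ∧
      (∀ r ∈ Icc x rb, (r - x) * S r ≤ (sA x - x) * S (sA x)) ∧
      (∀ m ∈ Icc x rb,
        (∀ r ∈ Icc x rb, (r - x) * S r ≤ (m - x) * S m) → m = sA x)) :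
    ∃ ε > (0:ℝ),
      (∀ x ∈ Ioc (0:ℝ) ε,
        IsNash D S rb x (B x) ∧ x < mA (B x) ∧ sA x < B x) ∧
      InjOn (fun x => (x, B x)) (Ioc (0:ℝ) ε) ∧
      {p : ℝ × ℝ | IsNash D S rb p.1 p.2}.Infinite := by
  have hDd : DifferentiableOn ℝ D (Icc 0 rb) := (hD2.differentiableOn (by norm_num)).mono hU
  obtain ⟨m, hm, hDm, hSm⟩ := exists_uniform_slope_bounds isCompact_Icc (convex_Icc 0 rb) hDd
    ((hS2.differentiableOn (by norm_num)).mono hU)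
    ((hD2.continuousOn_deriv_of_isOpen hUo (by norm_num)).mono hU)
    ((hS2.continuousOn_deriv_of_isOpen hUo (by norm_num)).mono hU) hD' hS'
  obtain ⟨u, hu, hDu⟩ : ∃ u, 0 < u ∧ Icc 0 u ⊆ {t | D t < m * (rhat / 2)} := by
    refine mem_nhdsGE_iff_exists_Icc_subset.1 ?_
    rw [← nhdsWithin_Icc_eq_nhdsGE (hrhat.trans hrb)]
    exact (hDd.continuousOn 0 ⟨le_rfl, by linarith⟩).eventually_lt continuousWithinAt_const
      (by rw [hD0]; positivity)
  set ε := min (rhat / 4) u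
  have hequil : ∀ x ∈ Ioc (0:ℝ) ε, IsNash D S rb x (B x) ∧ x < mA (B x) ∧ sA x < B x := by
    rintro x ⟨hx, hxε⟩
    have hxr : x ≤ rhat / 4 := hxε.trans (min_le_left _ _)
    obtain ⟨⟨hy, hyrb⟩, hbal⟩ := hB x ⟨hx.le, by linarith⟩
    have hsmall : D x < m * (B x - 2 * x) :=
      (hDu ⟨hx.le, hxε.trans (min_le_right _ _)⟩).trans_le (by nlinarith)
    have hDx : 0 ≤ D x := hD0 ▸ monotoneOn_of_slope_ge hm.le hDm ⟨le_rfl, by linarith⟩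
      ⟨hx.le, by linarith⟩ hx.le
    obtain ⟨hmAy, hmAmax, -⟩ := hmA (B x) ⟨by linarith, hyrb⟩
    obtain ⟨hsAx, hsAmax, -⟩ := hsA x ⟨hx.le, by linarith⟩
    exact ⟨isNash_of_balanced hm.le hDm hSm hx.le (by linarith) hyrb hbal hDx (by nlinarith),
      lt_of_isMaxOn_spread_mul_demand hm.le hDm hx (by linarith) hyrb hsmall hmAy
        (isMaxOn_iff.2 hmAmax),
      lt_of_isMaxOn_spread_mul_supply hm.le hSm hx (by linarith) hyrb (hbal ▸ hsmall) hsAx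
        (isMaxOn_iff.2 hsAmax)⟩
  have hinj : InjOn (fun x => (x, B x)) (Ioc (0:ℝ) ε) := fun a _ b _ h => congrArg Prod.fst h
  have hε : 0 < ε := lt_min (by positivity) hu
  refine ⟨ε, hε, hequil, hinj, ((Ioc_infinite hε).image hinj).mono ?_⟩
  rintro _ ⟨x, hx, rfl⟩
  exact (hequil x hx).1

/-- Multiplicity of equilibrium: there is `ε > 0` such that every balanced pair
`(x, B x)` with `x ∈ (0, ε]` is a Nash equilibrium with strict constrained
inequalities; the map `x ↦ (x, B x)` is injective there, so the set of Nash
equilibria is a continuum (in particular infinite). -/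
theorem multiplicity_of_equilibrium
    (rhat rb Tmax : ℝ) (D S B mA sA : ℝ → ℝ)
    (hrhat : 0 < rhat) (hrb : rhat < rb) (hTmax : 0 < Tmax)
    (hDc : ContinuousOn D (Icc 0 rb)) (hDm : StrictMonoOn D (Icc 0 rb))
    (hD0 : D 0 = 0) (hDr : D rhat = Tmax)
    (hSc : ContinuousOn S (Icc 0 rb)) (hSa : StrictAntiOn S (Icc 0 rb))
    (hSb : S rb = 0) (hSr : S rhat = Tmax)
    (U : Set ℝ) (hUo : IsOpen U) (hU : Icc (0:ℝ) rb ⊆ U)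
    (hD2 : ContDiffOn ℝ 2 D U) (hS2 : ContDiffOn ℝ 2 S U)
    (hD' : ∀ x ∈ Icc (0:ℝ) rb, 0 < deriv D x)
    (hD'' : ∀ x ∈ Icc (0:ℝ) rb, deriv (deriv D) x < 0)
    (hS' : ∀ x ∈ Icc (0:ℝ) rb, deriv S x < 0)
    (hS'' : ∀ x ∈ Icc (0:ℝ) rb, deriv (deriv S) x < 0)
    (hB : ∀ x ∈ Icc (0:ℝ) rhat, B x ∈ Icc rhat rb ∧ S (B x) = D x)
    (hmA : ∀ y ∈ Ioc (0:ℝ) rb, mA y ∈ Icc (0:ℝ) y ∧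
      (∀ r ∈ Icc (0:ℝ) y, (y - r) * D r ≤ (y - mA y) * D (mA y)) ∧
      (∀ m ∈ Icc (0:ℝ) y,
        (∀ r ∈ Icc (0:ℝ) y, (y - r) * D r ≤ (y - m) * D m) → m = mA y))
    (hsA : ∀ x ∈ Ico (0:ℝ) rb, sA x ∈ Icc x rb ∧
      (∀ r ∈ Icc x rb, (r - x) * S r ≤ (sA x - x) * S (sA x)) ∧
      (∀ m ∈ Icc x rb,
        (∀ r ∈ Icc x rb, (r - x) * S r ≤ (m - x) * S m) → m = sA x)) :
    ∃ ε > (0:ℝ),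
      (∀ x ∈ Ioc (0:ℝ) ε,
        IsNash D S rb x (B x) ∧ x < mA (B x) ∧ sA x < B x) ∧
      InjOn (fun x => (x, B x)) (Ioc (0:ℝ) ε) ∧
      {p : ℝ × ℝ | IsNash D S rb p.1 p.2}.Infinite :=
  multiplicity_of_equilibrium_general rhat rb D S B mA sA hrhat hrb hD0 U hUo hU hD2 hS2 hD' hS' hB
    hmA hsA
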